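/- In the simply-typed lambda calculus with exceptions λexc, the CEK-style abstract machine transition relation is deterministic: every configuration has at most one successor configuration. -/
import Mathlib


namespace Exc

/-- Exception names. -/
abbrev Exn := Nat

mutual
inductive Expr : Type where
  | val (v : Val)
  | var (x : String)
  | app (e1 e2 : Expr)
  | throwE (ex : Exn) (e : Expr)
  | tryc (ex : Exn) (e1 : Expr) (h : String) (e2 : Expr)
inductive Val : Type where
  | recfun (f x : String) (e : Expr)
end

/-- Continuation stacks (evaluation contexts), with the innermost frame
as the outermost constructor.  `argF K e` is `K[e ∅]`, `funF K v` is
`K[∅ v]`-style application frames, `tryF K ex h e` is a handler frame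
`K[try ∅ catch ex with h. e]`, and `throwF K ex` is `K[throw ex ∅]`. -/
inductive Ectx : Type where
  | hole
  | argF (K : Ectx) (e : Expr)
  | funF (K : Ectx) (v : Val)
  | tryF (K : Ectx) (ex : Exn) (h : String) (e : Expr)
  | throwF (K : Ectx) (ex : Exn)

/-- `ecomp K1 K2` places the frames of `K2` inside `K1`. -/
def ecomp (K1 : Ectx) : Ectx → Ectx
  | .hole => K1
  | .argF K e => .argF (ecomp K1 K) e
  | .funF K v => .funF (ecomp K1 K) v
  | .tryF K ex h e => .tryF (ecomp K1 K) ex h e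
  | .throwF K ex => .throwF (ecomp K1 K) ex

/-- `K` contains no handler frame for exception `ex`. -/
def noHandler (ex : Exn) : Ectx → Prop
  | .hole => True
  | .argF K _ => noHandler ex K
  | .funF K _ => noHandler ex K
  | .tryF K ex' _ _ => ex' ≠ ex ∧ noHandler ex K
  | .throwF K _ => noHandler ex K

mutual
def substE (x : String) (w : Val) : Expr → Expr
  | .val v => .val (substV x w v)
  | .var y => if y = x then .val w else .var y
  | .app e1 e2 => .app (substE x w e1) (substE x w e2)
  | .throwE ex e => .throwE ex (substE x w e)
  | .tryc ex e1 h e2 =>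
      .tryc ex (substE x w e1) h (if h = x then e2 else substE x w e2)
def substV (x : String) (w : Val) : Val → Val
  | .recfun f y e =>
      if f = x ∨ y = x then .recfun f y e else .recfun f y (substE x w e)
end

/-- Abstract machine configurations. -/
inductive Config : Type where
  | term (e : Expr)
  | eval (e : Expr) (K : Ectx)
  | cont (K : Ectx) (v : Val)
  | ret (v : Val)

/-- CEK-machine transitions for λexc. -/
inductive MStep : Config → Config → Prop where
  | start (e : Expr) : MStep (.term e) (.eval e .hole)
  | retv (v : Val) : MStep (.cont .hole v) (.ret v)
  | evalVal (v : Val) (K : Ectx) : MStep (.eval (.val v) K) (.cont K v)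
  | evalApp (e0 e1 : Expr) (K : Ectx) :
      MStep (.eval (.app e0 e1) K) (.eval e1 (.argF K e0))
  | evalTry (ex : Exn) (e1 : Expr) (h : String) (e2 : Expr) (K : Ectx) :
      MStep (.eval (.tryc ex e1 h e2) K) (.eval e1 (.tryF K ex h e2))
  | evalThrow (ex : Exn) (e : Expr) (K : Ectx) :
      MStep (.eval (.throwE ex e) K) (.eval e (.throwF K ex))
  | contArg (K : Ectx) (e0 : Expr) (v : Val) :
      MStep (.cont (.argF K e0) v) (.eval e0 (.funF K v))
  | contBeta (K : Ectx) (f x : String) (e : Expr) (v : Val) :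
      MStep (.cont (.funF K v) (.recfun f x e))
            (.eval (substE x v (substE f (.recfun f x e) e)) K)
  | contTry (K : Ectx) (ex : Exn) (h : String) (e2 : Expr) (v : Val) :
      MStep (.cont (.tryF K ex h e2) v) (.eval (.val v) K)
  | contThrowHandle (K' : Ectx) (ex : Exn) (h : String) (e2 : Expr)
      (K : Ectx) (v : Val) (hK : noHandler ex K) :
      MStep (.cont (.throwF (ecomp (.tryF K' ex h e2) K) ex) v)
            (.eval (substE h v e2) K')

end Exc

namespace Exc

lemma ecomp_tryF_inj (ex : Exn) :
    ∀ (K K' A A' : Ectx) (h h' : String) (e e' : Expr),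
    ecomp (.tryF A ex h e) K = ecomp (.tryF A' ex h' e') K' →
    noHandler ex K → noHandler ex K' →
    A = A' ∧ h = h' ∧ e = e' ∧ K = K' := by
  intro K
  induction K with
  | hole =>
    intro K' A A' h h' e e' heq hK hK'
    cases K' with
    | hole => simp [ecomp] at heq; simp_all
    | tryF K'' ex'' h'' e'' =>
      simp [ecomp] at heq
      exact absurd heq.2.1.symm hK'.1
    | argF K'' e'' => simp [ecomp] at heq
    | funF K'' v'' => simp [ecomp] at heq
    | throwF K'' ex'' => simp [ecomp] at heq
  | argF K e0 ih =>
    intro K' A A' h h' e e' heq hK hK'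
    cases K' with
    | hole => simp [ecomp] at heq
    | argF K'' e'' =>
      simp [ecomp] at heq
      obtain ⟨h1, h2⟩ := heq
      obtain ⟨a, b, c, d⟩ := ih K'' A A' h h' e e' h1 hK hK'
      exact ⟨a, b, c, by rw [d, h2]⟩
    | funF K'' v'' => simp [ecomp] at heq
    | tryF K'' ex'' h'' e'' => simp [ecomp] at heq
    | throwF K'' ex'' => simp [ecomp] at heq
  | funF K v0 ih =>
    intro K' A A' h h' e e' heq hK hK'
    cases K' with
    | hole => simp [ecomp] at heq
    | funF K'' v'' =>
      simp [ecomp] at heq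
      obtain ⟨h1, h2⟩ := heq
      obtain ⟨a, b, c, d⟩ := ih K'' A A' h h' e e' h1 hK hK'
      exact ⟨a, b, c, by rw [d, h2]⟩
    | argF K'' e'' => simp [ecomp] at heq
    | tryF K'' ex'' h'' e'' => simp [ecomp] at heq
    | throwF K'' ex'' => simp [ecomp] at heq
  | tryF K ex0 h0 e0 ih =>
    intro K' A A' h h' e e' heq hK hK'
    cases K' with
    | hole =>
      simp [ecomp] at heq
      exact absurd heq.2.1 hK.1
    | tryF K'' ex'' h'' e'' =>
      simp [ecomp] at heq
      obtain ⟨h1, h2, h3, h4⟩ := heq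
      obtain ⟨a, b, c, d⟩ := ih K'' A A' h h' e e' h1 hK.2 hK'.2
      exact ⟨a, b, c, by rw [d, h2, h3, h4]⟩
    | argF K'' e'' => simp [ecomp] at heq
    | funF K'' v'' => simp [ecomp] at heq
    | throwF K'' ex'' => simp [ecomp] at heq
  | throwF K ex0 ih =>
    intro K' A A' h h' e e' heq hK hK'
    cases K' with
    | hole => simp [ecomp] at heq
    | throwF K'' ex'' =>
      simp [ecomp] at heq
      obtain ⟨h1, h2⟩ := heq
      obtain ⟨a, b, c, d⟩ := ih K'' A A' h h' e e' h1 hK hK'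
      exact ⟨a, b, c, by rw [d, h2]⟩
    | argF K'' e'' => simp [ecomp] at heq
    | funF K'' v'' => simp [ecomp] at heq
    | tryF K'' ex'' h'' e'' => simp [ecomp] at heq

lemma throw_inv {KK : Ectx} {ex : Exn} {v : Val} {c2 : Config}
    (h : MStep (.cont (.throwF KK ex) v) c2) :
    ∃ K' hn e2 K, KK = ecomp (.tryF K' ex hn e2) K ∧ noHandler ex K ∧
      c2 = .eval (substE hn v e2) K' := by
  cases h with
  | contThrowHandle K' ex hn e2 K v hK => exact ⟨K', hn, e2, K, rfl, hK, rfl⟩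

end Exc

/-- the CEK abstract machine of λexc is deterministic:
every configuration has at most one successor. -/
theorem exc_machine_deterministic (c c1 c2 : Exc.Config)
    (h1 : Exc.MStep c c1) (h2 : Exc.MStep c c2) : c1 = c2 := by
  cases h1 with
  | start e => cases h2; rfl
  | retv v => cases h2; rfl
  | evalVal v K => cases h2; rfl
  | evalApp e0 e1 K => cases h2; rfl
  | evalTry ex e1 h e2 K => cases h2; rfl
  | evalThrow ex e K => cases h2; rfl
  | contArg K e0 v => cases h2; rfl
  | contBeta K f x e v => cases h2; rfl
  | contTry K ex h e2 v => cases h2; rfl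
  | contThrowHandle K' ex h e2 K v hK =>
    obtain ⟨K2', h2', e22, K2, heq, hK2, hc2⟩ := Exc.throw_inv h2
    obtain ⟨a, b, c, d⟩ := Exc.ecomp_tryF_inj ex K K2 K' K2' h h2' e2 e22 heq hK hK2
    subst a; subst b; subst c; exact hc2.symm
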